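/- arXiv:1312.1205 — 2 statements merged into one kernel-verified Lean document; each statement's English description precedes it below -/
import Mathlib

section
/- For all finite nonempty simple graphs G and G', and for every labeled graph H on vertex set {1,…,t}: r(H, G ⊗ G') = Σ r(H1, G) · r(H2, G'), where the sum ranges over all ordered pairs (H1, H2) of labeled graphs on {1,…,t} whose edge sets have symmetric difference equal to the edge set of H. That is, the labeled t-profile of G ⊗ G' is the convolution, over the group of labeled t-vertex graphs under symmetric difference of edge sets, of the labeled t-profiles of G and G'. -/
open Filter Topology SimpleGraph

namespace IndPaper

/-- The pullback of `G : SimpleGraph V` along a map `f : Fin t → V`: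
distinct `i, j` are adjacent iff `f i` and `f j` are adjacent in `G`. -/
def pull {V : Type*} {t : ℕ} (G : SimpleGraph V) (f : Fin t → V) : SimpleGraph (Fin t) where
  Adj i j := G.Adj (f i) (f j)
  symm := ⟨fun i j h => G.adj_symm h⟩
  loopless := ⟨fun i h => G.irrefl h⟩

/-- `r(H,G)`: the labeled density with repetitions of the labeled graph `H` in `G`. -/
noncomputable def labDensity {V : Type*} [Fintype V] {t : ℕ}
    (H : SimpleGraph (Fin t)) (G : SimpleGraph V) : ℝ :=
  (Nat.card {f : Fin t → V // pull G f = H} : ℝ) / (Fintype.card V : ℝ) ^ t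

/-- `R(H,G)`: the density with repetitions of the isomorphism type of `H` in `G`. -/
noncomputable def repDensity {V : Type*} [Fintype V] {t : ℕ}
    (H : SimpleGraph (Fin t)) (G : SimpleGraph V) : ℝ :=
  (Nat.card {f : Fin t → V // Nonempty (pull G f ≃g H)} : ℝ) / (Fintype.card V : ℝ) ^ t

/-- `p(H,G)`: the labeled density without repetitions (injective samples). -/
noncomputable def injDensity {V : Type*} [Fintype V] {t : ℕ}
    (H : SimpleGraph (Fin t)) (G : SimpleGraph V) : ℝ :=
  (Nat.card {f : Fin t → V // Function.Injective f ∧ pull G f = H} : ℝ) /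
    ((Fintype.card V).descFactorial t : ℝ)

/-- `P(H,G)`: the number of `t`-subsets of `V(G)` inducing a copy of `H`, over `C(n,t)`. -/
noncomputable def subsetDensity {V : Type*} [Fintype V] {t : ℕ}
    (H : SimpleGraph (Fin t)) (G : SimpleGraph V) : ℝ :=
  (Nat.card {s : Finset V // s.card = t ∧ Nonempty (G.induce (↑s : Set V) ≃g H)} : ℝ) /
    ((Fintype.card V).choose t : ℝ)

/-- `max_{|G|=n} P(H,G)`. -/
noncomputable def maxDensity {t : ℕ} (H : SimpleGraph (Fin t)) (n : ℕ) : ℝ :=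
  sSup {x : ℝ | ∃ G : SimpleGraph (Fin n), x = subsetDensity H G}

/-- `min_{|G|=n} P(H,G)`. -/
noncomputable def minDensity {t : ℕ} (H : SimpleGraph (Fin t)) (n : ℕ) : ℝ :=
  sInf {x : ℝ | ∃ G : SimpleGraph (Fin n), x = subsetDensity H G}

/-- The inducibility `I(H) = lim_n max_{|G|=n} P(H,G)` (the sequence of maxima is
eventually non-increasing, hence the limit exists and equals the `limsup`). -/
noncomputable def inducibility {t : ℕ} (H : SimpleGraph (Fin t)) : ℝ :=
  Filter.limsup (fun n => maxDensity H n) Filter.atTop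

/-- The minimal inducibility `i(H) = lim_n min_{|G|=n} P(H,G)` (the sequence of minima is
eventually non-decreasing, hence the limit exists and equals the `liminf`). -/
noncomputable def minInducibility {t : ℕ} (H : SimpleGraph (Fin t)) : ℝ :=
  Filter.liminf (fun n => minDensity H n) Filter.atTop

/-- The spectral profile: discrete Fourier transform of the labeled profile over the group
of labeled `t`-vertex graphs under symmetric difference of edge sets. -/
noncomputable def spectral {V : Type*} [Fintype V] {t : ℕ}
    (H : SimpleGraph (Fin t)) (G : SimpleGraph V) : ℝ :=
  ∑ H' : SimpleGraph (Fin t),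
    (-1 : ℝ) ^ (Nat.card (H ⊓ H').edgeSet) * labDensity H' G

/-- The tensor product `G ⊗ G'`. -/
def tensor {V W : Type*} (G : SimpleGraph V) (G' : SimpleGraph W) : SimpleGraph (V × W) where
  Adj x y := Xor' (G.Adj x.1 y.1) (G'.Adj x.2 y.2)
  symm := ⟨fun x y h => by
    rcases h with ⟨h1, h2⟩ | ⟨h1, h2⟩
    · exact Or.inl ⟨h1.symm, fun hc => h2 hc.symm⟩
    · exact Or.inr ⟨h1.symm, fun hc => h2 hc.symm⟩⟩
  loopless := ⟨fun x h => by
    rcases h with ⟨h1, _⟩ | ⟨h1, _⟩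
    · exact G.irrefl h1
    · exact G'.irrefl h1⟩

/-- The composition (lexicographic product) `G ⊙ G'`. -/
def comp {V W : Type*} (G : SimpleGraph V) (G' : SimpleGraph W) : SimpleGraph (V × W) where
  Adj x y := G.Adj x.1 y.1 ∨ (x.1 = y.1 ∧ G'.Adj x.2 y.2)
  symm := ⟨fun x y h => by
    rcases h with h | ⟨h1, h2⟩
    · exact Or.inl h.symm
    · exact Or.inr ⟨h1.symm, h2.symm⟩⟩
  loopless := ⟨fun x h => by
    rcases h with h | ⟨_, h2⟩
    · exact G.irrefl h
    · exact G'.irrefl h2⟩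

/-- The blow-up of `G` of order `m`. -/
def blowUp {V : Type*} (G : SimpleGraph V) (m : ℕ) : SimpleGraph (V × Fin m) where
  Adj x y := G.Adj x.1 y.1
  symm := ⟨fun _ _ h => G.adj_symm h⟩
  loopless := ⟨fun _ h => G.irrefl h⟩

/-- Vertex type of the `n`-fold iterated composition. -/
def iterVert (V : Type) : ℕ → Type
  | 0 => PUnit
  | n + 1 => V × iterVert V n

instance iterVertFintype (V : Type) [Fintype V] : (n : ℕ) → Fintype (iterVert V n)
  | 0 => inferInstanceAs (Fintype PUnit)
  | n + 1 => letI := iterVertFintype V n; inferInstanceAs (Fintype (V × iterVert V n))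

/-- The `n`-fold iterated composition `G^{⊙n}` (`n = 0` gives a single vertex). -/
def nestedPow {V : Type} (G : SimpleGraph V) : (n : ℕ) → SimpleGraph (iterVert V n)
  | 0 => (⊥ : SimpleGraph PUnit)
  | n + 1 => comp G (nestedPow G n)

/- Fixed labeled representatives of the 4-vertex isomorphism types. -/
def K3 : SimpleGraph (Fin 3) := ⊤
def K4 : SimpleGraph (Fin 4) := ⊤
def A4 : SimpleGraph (Fin 4) := ⊥
def P4 : SimpleGraph (Fin 4) := SimpleGraph.pathGraph 4
def C4 : SimpleGraph (Fin 4) := SimpleGraph.cycleGraph 4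
def M4 : SimpleGraph (Fin 4) :=
  SimpleGraph.fromRel (fun i j => (i = 0 ∧ j = 1) ∨ (i = 2 ∧ j = 3))
def V4 : SimpleGraph (Fin 4) :=
  SimpleGraph.fromRel (fun i j => (i = 0 ∧ j = 1) ∨ (i = 0 ∧ j = 2))
def Q4 : SimpleGraph (Fin 4) :=
  SimpleGraph.fromRel (fun i j =>
    (i = 0 ∧ j = 1) ∨ (i = 0 ∧ j = 2) ∨ (i = 1 ∧ j = 2) ∨ (i = 0 ∧ j = 3))
def T4 : SimpleGraph (Fin 4) :=
  SimpleGraph.fromRel (fun i j => (i = 0 ∧ j = 1) ∨ (i = 0 ∧ j = 2) ∨ (i = 1 ∧ j = 2))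
def S4 : SimpleGraph (Fin 4) :=
  SimpleGraph.fromRel (fun i j => i = 0 ∧ (j = 1 ∨ j = 2 ∨ j = 3))
def D4 : SimpleGraph (Fin 4) :=
  SimpleGraph.fromRel (fun i j =>
    (i = 0 ∧ j = 1) ∨ (i = 0 ∧ j = 2) ∨ (i = 0 ∧ j = 3) ∨ (i = 1 ∧ j = 2) ∨ (i = 1 ∧ j = 3))
def E4 : SimpleGraph (Fin 4) :=
  SimpleGraph.fromRel (fun i j => i = 0 ∧ j = 1)

end IndPaper

/-! A map `Fin t → V × W` is a pair of maps `f₁ : Fin t → V`, `f₂ : Fin t → W`, and the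
pullback of `G ⊗ G'` along it is the symmetric difference of the pullbacks of `G` along `f₁`
and of `G'` along `f₂`. Sorting the maps by this pair of pulled-back graphs turns the count for
`G ⊗ G'` into the convolution of the counts for `G` and `G'`, and the normalisation
`|V × W| ^ t = |V| ^ t * |W| ^ t` factors accordingly. -/

open scoped symmDiff

namespace IndPaper

theorem symmDiff_adj {V : Type*} (G H : SimpleGraph V) (v w : V) :
    (G ∆ H).Adj v w ↔ Xor (G.Adj v w) (H.Adj v w) := Iff.rfl

theorem eq_symmDiff_iff {V : Type*} {G H₁ H₂ : SimpleGraph V} :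
    G = H₁ ∆ H₂ ↔ ∀ v w, G.Adj v w ↔ Xor (H₁.Adj v w) (H₂.Adj v w) := by
  simp only [SimpleGraph.ext_iff, funext_iff, eq_iff_iff, symmDiff_adj]

theorem pull_tensor {V W : Type*} (G : SimpleGraph V) (G' : SimpleGraph W) {t : ℕ}
    (f : Fin t → V × W) :
    pull (tensor G G') f = pull G (Prod.fst ∘ f) ∆ pull G' (Prod.snd ∘ f) := rfl

theorem card_fiber_op_eq_sum {α β γ δ : Type*} [Finite α] [Finite β] [Fintype γ]
    [DecidableEq δ] (a : α → γ) (b : β → γ) (op : γ → γ → δ) (d : δ) :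
    Nat.card {p : α × β // op (a p.1) (b p.2) = d} =
      ∑ c₁ : γ, ∑ c₂ : γ,
        if d = op c₁ c₂ then Nat.card {x // a x = c₁} * Nat.card {y // b y = c₂}
        else 0 := by
  classical
  have := Fintype.ofFinite α
  have := Fintype.ofFinite β
  simp only [Nat.card_eq_fintype_card, Fintype.card_subtype]
  rw [Finset.card_eq_sum_card_fiberwise (f := fun p : α × β => (a p.1, b p.2)) (t := Finset.univ)
      (fun _ _ => Finset.mem_univ _), Fintype.sum_prod_type]
  refine Finset.sum_congr rfl fun c₁ _ => Finset.sum_congr rfl fun c₂ _ => ?_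
  split_ifs with hd
  · rw [← Finset.card_product, ← Finset.filter_product, Finset.filter_filter]
    congr 1
    ext p
    simp only [Finset.mem_filter, Finset.mem_product, Finset.mem_univ, true_and, Prod.mk.injEq]
    constructor
    · exact fun h => h.2
    · rintro ⟨rfl, rfl⟩
      exact ⟨hd.symm, rfl, rfl⟩
  · rw [Finset.card_eq_zero, Finset.filter_filter, Finset.filter_eq_empty_iff]
    rintro p - ⟨rfl, hp⟩
    simp only [Prod.mk.injEq] at hp
    exact hd (hp.1 ▸ hp.2 ▸ rfl)

open scoped Classical in
theorem card_pull_tensor {V W : Type*} [Finite V] [Finite W] (G : SimpleGraph V)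
    (G' : SimpleGraph W) {t : ℕ} (H : SimpleGraph (Fin t)) :
    Nat.card {f : Fin t → V × W // pull (tensor G G') f = H} =
      ∑ H₁ : SimpleGraph (Fin t), ∑ H₂ : SimpleGraph (Fin t),
        if H = H₁ ∆ H₂ then
          Nat.card {f : Fin t → V // pull G f = H₁} *
            Nat.card {f : Fin t → W // pull G' f = H₂}
        else 0 := by
  rw [← card_fiber_op_eq_sum (pull G) (pull G') (· ∆ ·) H]
  exact Nat.card_congr <|
    (Equiv.arrowProdEquivProdArrow (Fin t) (fun _ => V) (fun _ => W)).subtypeEquiv fun f => by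
      rw [pull_tensor]
      rfl

end IndPaper

open scoped Classical in
open IndPaper in
theorem labDensity_tensor_eq_convolution_general
    {V W : Type} [Fintype V] [Fintype W]
    (G : SimpleGraph V) (G' : SimpleGraph W) {t : ℕ} (H : SimpleGraph (Fin t)) :
    labDensity H (tensor G G') =
      ∑ H1 : SimpleGraph (Fin t), ∑ H2 : SimpleGraph (Fin t),
        if (∀ i j : Fin t, H.Adj i j ↔ Xor' (H1.Adj i j) (H2.Adj i j)) then
          labDensity H1 G * labDensity H2 G'
        else 0 := by
  calc labDensity H (tensor G G')
      = (∑ H₁ : SimpleGraph (Fin t), ∑ H₂ : SimpleGraph (Fin t),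
          if H = H₁ ∆ H₂ then
            (Nat.card {f : Fin t → V // pull G f = H₁} : ℝ) *
              Nat.card {f : Fin t → W // pull G' f = H₂}
          else 0) / ((Fintype.card V : ℝ) ^ t * (Fintype.card W : ℝ) ^ t) := by
        rw [labDensity, card_pull_tensor, Fintype.card_prod]
        push_cast
        rw [mul_pow]
    _ = _ := by
        simp only [Finset.sum_div, ite_div, zero_div, ← div_mul_div_comm, labDensity,
          eq_symmDiff_iff]
        congr!

open scoped Classical in
open IndPaper in
/-- The labeled `t`-profile of `G ⊗ G'` is the convolution of the labeled profiles of `G`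
and `G'` over the group of labeled `t`-vertex graphs under symmetric difference of edges. -/
theorem labDensity_tensor_eq_convolution
    {V W : Type} [Fintype V] [Nonempty V] [Fintype W] [Nonempty W]
    (G : SimpleGraph V) (G' : SimpleGraph W) {t : ℕ} (H : SimpleGraph (Fin t)) :
    labDensity H (tensor G G') =
      ∑ H1 : SimpleGraph (Fin t), ∑ H2 : SimpleGraph (Fin t),
        if (∀ i j : Fin t, H.Adj i j ↔ Xor' (H1.Adj i j) (H2.Adj i j)) then
          labDensity H1 G * labDensity H2 G'
        else 0 :=
  labDensity_tensor_eq_convolution_general G G' H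
end

section
/- Let t ≥ 2, let H' be a vertex-transitive finite simple graph on t+1 vertices (its automorphism group acts transitively on the vertices), and let H be the graph obtained from H' by deleting a single vertex. Then I(H) ≥ t! / ((t+1)^{t−1} − 1). -/
open Filter Topology SimpleGraph

/-!
Write `c(G)` for the number of induced copies of `H` in `G`. In the lexicographic product `H' ⊙ G`
of `H'` with a graph `G` on `n` vertices, a `t`-set induces `H` if it lies in one fibre and induces
`H` in `G`, or if it misses one fibre `v` and meets each other fibre once: then it induces `H' - v`,
which is `H` by vertex-transitivity. For `t ≥ 2` the two families are disjoint, so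
`c(H' ⊙ G) ≥ (t+1) c(G) + (t+1) n^t`. On the nested powers, with `n_k = (t+1)^k`, the normalised
counts `c_k / n_k^t` therefore approach the fixed point `1 / ((t+1)^{t-1} - 1)` of
`x ↦ (x + 1) / (t+1)^{t-1}`; precisely, `n_k^t ≤ ((t+1)^{t-1} - 1) c_k + n_k`. As
`C(n,t) ≤ n^t / t!`, the density of `H` in the `k`-th power is at least
`(1 - 1/n_k) t! / ((t+1)^{t-1} - 1)`.
-/

open Finset

namespace IndPaper

section Copies

variable {V W : Type*} [Fintype V] [Fintype W] {t : ℕ} (H : SimpleGraph (Fin t))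

open Classical in
noncomputable def inducedCopies (G : SimpleGraph V) : Finset (Finset V) :=
  {s | #s = t ∧ Nonempty (G.induce (s : Set V) ≃g H)}

variable {H}

lemma mem_inducedCopies {G : SimpleGraph V} {s : Finset V} :
    s ∈ inducedCopies H G ↔ #s = t ∧ Nonempty (G.induce (s : Set V) ≃g H) := by
  simp [inducedCopies]

lemma subsetDensity_eq (G : SimpleGraph V) :
    subsetDensity H G = #(inducedCopies H G) / (Fintype.card V).choose t := by
  classical
  rw [subsetDensity, Nat.card_eq_fintype_card, Fintype.card_subtype]
  congr

lemma card_inducedCopies_le_choose (G : SimpleGraph V) :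
    #(inducedCopies H G) ≤ (Fintype.card V).choose t := by
  rw [← card_univ, ← card_powersetCard]
  exact card_le_card fun s hs => mem_powersetCard.mpr ⟨subset_univ s, (mem_inducedCopies.mp hs).1⟩

lemma subsetDensity_le_one (G : SimpleGraph V) : subsetDensity H G ≤ 1 := by
  rw [subsetDensity_eq]
  exact div_le_one_of_le₀ (by exact_mod_cast card_inducedCopies_le_choose G) (by positivity)

lemma map_mem_inducedCopies_of_iso {K : SimpleGraph W} {G : SimpleGraph V}
    (φ : K ↪g G) (e : K ≃g H) : univ.map φ.toEmbedding ∈ inducedCopies H G := by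
  have hrange : ((univ.map φ.toEmbedding : Finset V) : Set V) = Set.range φ := by simp
  refine mem_inducedCopies.mpr ⟨?_, ?_⟩
  · simpa using Fintype.card_congr e.toEquiv
  · rw [hrange]
    exact ⟨φ.isoInduceRange.symm.trans e⟩

lemma map_mem_inducedCopies {G : SimpleGraph V} {G' : SimpleGraph W} (φ : G ↪g G')
    {s : Finset V} (hs : s ∈ inducedCopies H G) : s.map φ.toEmbedding ∈ inducedCopies H G' := by
  obtain ⟨-, ⟨e⟩⟩ := mem_inducedCopies.mp hs
  convert map_mem_inducedCopies_of_iso (φ.comp (Embedding.induce (s : Set V))) e using 1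
  ext
  simp

lemma card_inducedCopies_le_of_embedding {G : SimpleGraph V} {G' : SimpleGraph W}
    (φ : G ↪g G') : #(inducedCopies H G) ≤ #(inducedCopies H G') :=
  card_le_card_of_injOn (fun s => s.map φ.toEmbedding) (fun _ hs => map_mem_inducedCopies φ hs)
    fun _ _ _ _ h => map_injective _ h

lemma subsetDensity_congr {G : SimpleGraph V} {G' : SimpleGraph W} (e : G ≃g G') :
    subsetDensity H G = subsetDensity H G' := by
  rw [subsetDensity_eq, subsetDensity_eq, Fintype.card_congr e.toEquiv,
    (card_inducedCopies_le_of_embedding e.toEmbedding).antisymm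
      (card_inducedCopies_le_of_embedding e.symm.toEmbedding)]

lemma factorial_mul_card_inducedCopies_div_le_subsetDensity (G : SimpleGraph V) :
    (t.factorial : ℝ) * #(inducedCopies H G) / Fintype.card V ^ t ≤ subsetDensity H G := by
  rw [subsetDensity_eq]
  obtain hC | hC := Nat.eq_zero_or_pos ((Fintype.card V).choose t)
  · have : #(inducedCopies H G) = 0 := Nat.le_zero.mp (hC ▸ card_inducedCopies_le_choose G)
    simp [this]
  · have hfac : (t.factorial : ℝ) * (Fintype.card V).choose t ≤ Fintype.card V ^ t := by
      exact_mod_cast (Nat.descFactorial_eq_factorial_mul_choose _ _).symm.trans_le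
        (Nat.descFactorial_le_pow _ _)
    calc (t.factorial : ℝ) * #(inducedCopies H G) / Fintype.card V ^ t
        ≤ #(inducedCopies H G) * t.factorial / (t.factorial * (Fintype.card V).choose t) := by
          rw [mul_comm]
          exact div_le_div_of_nonneg_left (by positivity) (by positivity) hfac
      _ = #(inducedCopies H G) / (Fintype.card V).choose t := by
          rw [mul_comm (t.factorial : ℝ), mul_div_mul_right _ _ (by positivity)]

end Copies

section Inducibility

variable {t : ℕ} {H : SimpleGraph (Fin t)}

lemma maxDensity_le_one (n : ℕ) : maxDensity H n ≤ 1 :=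
  csSup_le ⟨_, ⊥, rfl⟩ (by rintro x ⟨G, rfl⟩; exact subsetDensity_le_one G)

lemma subsetDensity_le_maxDensity {V : Type*} [Fintype V] (G : SimpleGraph V) :
    subsetDensity H G ≤ maxDensity H (Fintype.card V) := by
  rw [subsetDensity_congr (G.overFinIso rfl)]
  exact le_csSup ⟨1, by rintro x ⟨G', rfl⟩; exact subsetDensity_le_one G'⟩ ⟨_, rfl⟩

lemma le_inducibility_of_tendsto {φ : ℕ → ℕ} (hφ : Tendsto φ atTop atTop) {g : ℕ → ℝ} {L : ℝ}
    (hg : Tendsto g atTop (𝓝 L)) (hle : ∀ k, g k ≤ maxDensity H (φ k)) :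
    L ≤ inducibility H := by
  refine le_of_forall_lt_imp_le_of_dense fun c hc => ?_
  have hbdd : IsBoundedUnder (· ≤ ·) atTop (maxDensity H) :=
    isBoundedUnder_of ⟨1, maxDensity_le_one⟩
  refine le_limsup_of_frequently_le (hφ.frequently ?_) hbdd
  exact ((hg.eventually_const_lt hc).mono fun k hk => hk.le.trans (hle k)).frequently

end Inducibility

section Comp

variable {V W α : Type*}

def compFiber (G : SimpleGraph V) (G' : SimpleGraph W) (i : V) : G' ↪g comp G G' where
  toEmbedding := Function.Embedding.sectR i W
  map_rel_iff' {a b} := by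
    change G.Adj i i ∨ (i = i ∧ G'.Adj a b) ↔ G'.Adj a b
    simp

def compTransversal (G : SimpleGraph V) (G' : SimpleGraph W) (f : α ↪ V) (g : α → W) :
    G.comap f ↪g comp G G' where
  toFun a := (f a, g a)
  inj' _ _ h := f.injective (congrArg Prod.fst h)
  map_rel_iff' {a b} := by
    change G.Adj (f a) (f b) ∨ (f a = f b ∧ G'.Adj (g a) (g b)) ↔ G.Adj (f a) (f b)
    refine or_iff_left_of_imp fun ⟨hab, h⟩ => ?_
    rw [f.injective hab] at h
    exact absurd h (G'.irrefl)

variable {t : ℕ} (H' : SimpleGraph (Fin (t + 1))) (G : SimpleGraph α)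

lemma mem_map_compTransversal {v : Fin (t + 1)} {g : Fin t → α} {x : Fin (t + 1) × α} :
    x ∈ univ.map (compTransversal H' G v.succAboveEmb g).toEmbedding ↔
      ∃ j, (v.succAbove j, g j) = x := by
  simp [compTransversal]

lemma map_compTransversal_injective :
    Function.Injective fun q : Fin (t + 1) × (Fin t → α) =>
      univ.map (compTransversal H' G q.1.succAboveEmb q.2).toEmbedding := by
  rintro ⟨v, g⟩ ⟨v', g'⟩ h
  simp only at h
  have hmem : ∀ j, (v.succAbove j, g j) ∈
      univ.map (compTransversal H' G v'.succAboveEmb g').toEmbedding :=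
    fun j => h ▸ (mem_map_compTransversal H' G).mpr ⟨j, rfl⟩
  obtain rfl : v = v' := by
    by_contra hne
    obtain ⟨j, hj⟩ := Fin.exists_succAbove_eq (Ne.symm hne)
    obtain ⟨j', hj'⟩ := (mem_map_compTransversal H' G).mp (hmem j)
    exact Fin.succAbove_ne v' j' (congrArg Prod.fst hj' |>.trans hj)
  obtain rfl : g = g' := funext fun j => by
    obtain ⟨j', hj'⟩ := (mem_map_compTransversal H' G).mp (hmem j)
    obtain rfl := Fin.succAbove_right_injective (congrArg Prod.fst hj')
    exact (congrArg Prod.snd hj').symm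
  rfl

lemma map_compFiber_ne_map_compTransversal {s : Finset α} (hs : 1 < #s) (i v : Fin (t + 1))
    (g : Fin t → α) :
    s.map (compFiber H' G i).toEmbedding ≠
      univ.map (compTransversal H' G v.succAboveEmb g).toEmbedding := by
  intro h
  obtain ⟨a, ha, b, hb, hab⟩ := one_lt_card.mp hs
  have hfiber : ∀ x ∈ s, ∃ j, (v.succAbove j, g j) = (i, x) := fun x hx =>
    (mem_map_compTransversal H' G).mp (h ▸ mem_map_of_mem _ hx)
  obtain ⟨j, hj⟩ := hfiber a ha
  obtain ⟨j', hj'⟩ := hfiber b hb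
  obtain rfl := Fin.succAbove_right_injective
    ((congrArg Prod.fst hj).trans (congrArg Prod.fst hj').symm)
  exact hab ((congrArg Prod.snd hj).symm.trans (congrArg Prod.snd hj'))

lemma mul_add_mul_le_card_inducedCopies_comp [Fintype α] (ht : 2 ≤ t)
    {H : SimpleGraph (Fin t)}
    (hdel : ∀ v : Fin (t + 1), Nonempty (H'.comap v.succAboveEmb ≃g H)) :
    (t + 1) * #(inducedCopies H G) + (t + 1) * Fintype.card α ^ t ≤
      #(inducedCopies H (comp H' G)) := by
  classical
  set fibers := (univ ×ˢ inducedCopies H G).image fun p =>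
    p.2.map (compFiber H' G p.1).toEmbedding
  set transversals := (univ : Finset (Fin (t + 1) × (Fin t → α))).image fun q =>
    univ.map (compTransversal H' G q.1.succAboveEmb q.2).toEmbedding
  have hcard_fibers : #fibers = (t + 1) * #(inducedCopies H G) := by
    rw [card_image_of_injOn, card_product, card_univ, Fintype.card_fin]
    rintro ⟨i, s⟩ hs ⟨i', s'⟩ - h
    obtain ⟨a, ha⟩ : s.Nonempty := by
      rw [← card_pos, (mem_inducedCopies.mp (mem_product.mp hs).2).1]; omega
    obtain ⟨b, -, hb⟩ := mem_map.mp ((congrArg (_ ∈ ·) h).mp (mem_map_of_mem _ ha))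
    obtain rfl : i' = i := congrArg Prod.fst hb
    exact Prod.ext rfl (map_injective _ h)
  have hcard_transversals : #transversals = (t + 1) * Fintype.card α ^ t := by
    rw [card_image_of_injective _ (map_compTransversal_injective H' G), card_univ,
      Fintype.card_prod, Fintype.card_fun, Fintype.card_fin, Fintype.card_fin]
  have hdisj : Disjoint fibers transversals := by
    simp only [fibers, transversals, Finset.disjoint_left, mem_image]
    rintro _ ⟨⟨i, s⟩, hs, rfl⟩ ⟨⟨v, g⟩, -, h⟩
    refine map_compFiber_ne_map_compTransversal H' G ?_ i v g h.symm
    rw [(mem_inducedCopies.mp (mem_product.mp hs).2).1]; omega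
  have hsub : fibers ∪ transversals ⊆ inducedCopies H (comp H' G) := by
    simp only [fibers, transversals, union_subset_iff, image_subset_iff]
    exact ⟨fun p hp => map_mem_inducedCopies _ (mem_product.mp hp).2,
      fun q _ => map_mem_inducedCopies_of_iso _ (hdel q.1).some⟩
  calc (t + 1) * #(inducedCopies H G) + (t + 1) * Fintype.card α ^ t
      = #(fibers ∪ transversals) := by
        rw [card_union_of_disjoint hdisj, hcard_fibers, hcard_transversals]
    _ ≤ _ := card_le_card hsub

end Comp

lemma nonempty_iso_comap_succAboveEmb {t : ℕ} {H' : SimpleGraph (Fin (t + 1))}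
    (htrans : ∀ u v : Fin (t + 1), ∃ e : H' ≃g H', e u = v) {H : SimpleGraph (Fin t)}
    (hH : ∃ v : Fin (t + 1), Nonempty (H ≃g H'.induce {w : Fin (t + 1) | w ≠ v}))
    (v : Fin (t + 1)) : Nonempty (H'.comap v.succAboveEmb ≃g H) := by
  obtain ⟨v₀, ⟨f⟩⟩ := hH
  obtain ⟨e, rfl⟩ := htrans v v₀
  refine ⟨RelIso.trans ?_ f.symm⟩
  exact {
    toEquiv := (finSuccAboveEquiv v).trans
      (e.toEquiv.subtypeEquiv fun w => e.injective.ne_iff.symm)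
    map_rel_iff' := by simp [finSuccAboveEquiv, e.map_adj_iff] }

lemma card_iterVert (V : Type) [Fintype V] (k : ℕ) :
    Fintype.card (iterVert V k) = Fintype.card V ^ k := by
  induction k with
  | zero => exact Fintype.card_punit
  | succ k ih => exact (Fintype.card_prod V (iterVert V k)).trans (by rw [ih, pow_succ'])

lemma pow_le_card_inducedCopies_nestedPow {t : ℕ} (ht : 2 ≤ t) {H' : SimpleGraph (Fin (t + 1))}
    {H : SimpleGraph (Fin t)}
    (hdel : ∀ v : Fin (t + 1), Nonempty (H'.comap v.succAboveEmb ≃g H)) (k : ℕ) :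
    ((t + 1) ^ k) ^ t ≤
      ((t + 1) ^ (t - 1) - 1) * #(inducedCopies H (nestedPow H' k)) + (t + 1) ^ k := by
  induction k with
  | zero => simp
  | succ k ih =>
    have hstep := mul_add_mul_le_card_inducedCopies_comp H' (nestedPow H' k) ht hdel
    rw [card_iterVert, Fintype.card_fin] at hstep
    set A := (t + 1) ^ (t - 1) - 1
    have hA : (t + 1) ^ t = (t + 1) * A + (t + 1) := by
      rw [← mul_add_one, Nat.sub_add_cancel (Nat.one_le_pow _ _ (by omega)), ← pow_succ',
        Nat.sub_add_cancel (by omega)]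
    change _ ≤ A * #(inducedCopies H (comp H' (nestedPow H' k))) + _
    rw [pow_succ', mul_pow, hA]
    nlinarith [Nat.mul_le_mul_left (t + 1) ih, Nat.mul_le_mul_left A hstep]

lemma one_sub_inv_mul_div_le {t : ℕ} (ht : 2 ≤ t) {n c A x : ℝ} (hn : 1 ≤ n) (hA : 0 < A)
    (hx : 0 ≤ x) (h : n ^ t ≤ A * c + n) : (1 - n⁻¹) * (x / A) ≤ x * c / n ^ t := by
  obtain ⟨m, rfl⟩ : ∃ m, t = m + 2 := ⟨t - 2, by omega⟩
  have hn_le : n ≤ n ^ (m + 1) := le_self_pow₀ hn (by omega)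
  have hbound : (1 - n⁻¹) / A ≤ c / n ^ (m + 2) := by
    rw [div_le_div_iff₀ hA (by positivity), sub_mul, one_mul, pow_succ, mul_comm _ n,
      inv_mul_cancel_left₀ (by positivity)]
    rw [pow_succ] at h
    linarith
  calc (1 - n⁻¹) * (x / A) = x * ((1 - n⁻¹) / A) := by ring
    _ ≤ x * (c / n ^ (m + 2)) := mul_le_mul_of_nonneg_left hbound hx
    _ = x * c / n ^ (m + 2) := by ring

lemma one_sub_inv_mul_le_maxDensity_pow {t : ℕ} (ht : 2 ≤ t) {H' : SimpleGraph (Fin (t + 1))}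
    {H : SimpleGraph (Fin t)}
    (hdel : ∀ v : Fin (t + 1), Nonempty (H'.comap v.succAboveEmb ≃g H)) (k : ℕ) :
    (1 - (((t : ℝ) + 1) ^ k)⁻¹) * (t.factorial / (((t : ℝ) + 1) ^ (t - 1) - 1)) ≤
      maxDensity H ((t + 1) ^ k) := by
  have hA : 0 < ((t : ℝ) + 1) ^ (t - 1) - 1 := by
    have : (1 : ℝ) < ((t : ℝ) + 1) ^ (t - 1) := one_lt_pow₀ (by norm_cast; omega) (by omega)
    linarith
  have hcopies : (((t : ℝ) + 1) ^ k) ^ t ≤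
      (((t : ℝ) + 1) ^ (t - 1) - 1) * #(inducedCopies H (nestedPow H' k)) +
        ((t : ℝ) + 1) ^ k := by
    have := pow_le_card_inducedCopies_nestedPow ht hdel k
    rw [← Nat.cast_le (α := ℝ)] at this
    push_cast [Nat.one_le_pow _ _ (Nat.succ_pos t)] at this
    exact this
  calc _ ≤ t.factorial * #(inducedCopies H (nestedPow H' k)) / (((t : ℝ) + 1) ^ k) ^ t :=
        one_sub_inv_mul_div_le ht (one_le_pow₀ (by linarith)) hA (by positivity) hcopies
    _ ≤ subsetDensity H (nestedPow H' k) := by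
        simpa [card_iterVert] using factorial_mul_card_inducedCopies_div_le_subsetDensity
          (H := H) (nestedPow H' k)
    _ ≤ maxDensity H ((t + 1) ^ k) := by
        simpa [card_iterVert] using subsetDensity_le_maxDensity (H := H) (nestedPow H' k)

end IndPaper

open IndPaper in
/-- If `H'` is a vertex-transitive graph on `t+1` vertices (`t ≥ 2`) and `H` is obtained
from `H'` by deleting a single vertex, then `I(H) ≥ t!/((t+1)^{t−1} − 1)`. -/
theorem inducibility_of_vertexTransitive_delete
    {t : ℕ} (ht : 2 ≤ t) (H' : SimpleGraph (Fin (t + 1)))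
    (htrans : ∀ u v : Fin (t + 1), ∃ e : H' ≃g H', e u = v)
    (H : SimpleGraph (Fin t))
    (hH : ∃ v : Fin (t + 1), Nonempty (H ≃g H'.induce {w : Fin (t + 1) | w ≠ v})) :
    (Nat.factorial t : ℝ) / (((t : ℝ) + 1) ^ (t - 1) - 1) ≤ inducibility H := by
  have hdel := nonempty_iso_comap_succAboveEmb htrans hH
  have hpow : Tendsto (fun k : ℕ => ((t : ℝ) + 1) ^ k) atTop atTop :=
    tendsto_pow_atTop_atTop_of_one_lt (by norm_cast; omega)
  refine le_inducibility_of_tendsto (tendsto_pow_atTop_atTop_of_one_lt (by omega : 1 < t + 1))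
    ?_ (one_sub_inv_mul_le_maxDensity_pow ht hdel)
  simpa using ((tendsto_const_nhds (x := (1 : ℝ))).sub
    (tendsto_inv_atTop_zero.comp hpow)).mul_const
      ((t.factorial : ℝ) / (((t : ℝ) + 1) ^ (t - 1) - 1))
end
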